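/- arXiv:1904.07683 — 5 statements merged into one kernel-verified Lean document; each statement's English description precedes it below -/
import Mathlib

section
/- Let R be a commutative ring and let a₁, a₂, a₃, b₁₁, b₁₂, b₁₃, b₂₁, b₂₂, b₂₃, b₃₁, b₃₂, b₃₃ be elements of R. Define p₁ = (a₂ + b₁₂)(a₁ + b₂₁), p₂ = (a₃ + b₁₃)(a₁ + b₃₁), p₃ = (a₃ + b₂₃)(a₂ + b₃₂), p₄ = a₁(b₁₁ − b₁₂ − b₁₃ − a₂ − a₃), p₅ = a₂(b₂₂ − b₂₁ − b₂₃ − a₁ − a₃), p₆ = a₃(b₃₃ − b₃₁ − b₃₂ − a₁ − a₂), p₇ = b₁₂b₂₁, p₈ = b₁₃b₃₁, p₉ = b₂₃b₃₂. Then a₁b₁₁ + a₂b₂₁ + a₃b₃₁ = p₄ + p₁ + p₂ − p₇ − p₈, a₁b₁₂ + a₂b₂₂ + a₃b₃₂ = p₅ + p₁ + p₃ − p₇ − p₉, and a₁b₁₃ + a₂b₂₃ + a₃b₃₃ = p₆ + p₂ + p₃ − p₈ − p₉. (Correctness of the 9-multiplication vector–matrix algorithm, Algorithm 2.1.) -/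
/-- Correctness of the 9-multiplication vector–matrix algorithm (Algorithm 2.1). -/
theorem vector_matrix_nine_mults {R : Type*} [CommRing R]
    (a1 a2 a3 b11 b12 b13 b21 b22 b23 b31 b32 b33 : R)
    (p1 p2 p3 p4 p5 p6 p7 p8 p9 : R)
    (hp1 : p1 = (a2 + b12) * (a1 + b21))
    (hp2 : p2 = (a3 + b13) * (a1 + b31))
    (hp3 : p3 = (a3 + b23) * (a2 + b32))
    (hp4 : p4 = a1 * (b11 - b12 - b13 - a2 - a3))
    (hp5 : p5 = a2 * (b22 - b21 - b23 - a1 - a3))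
    (hp6 : p6 = a3 * (b33 - b31 - b32 - a1 - a2))
    (hp7 : p7 = b12 * b21)
    (hp8 : p8 = b13 * b31)
    (hp9 : p9 = b23 * b32) :
    a1 * b11 + a2 * b21 + a3 * b31 = p4 + p1 + p2 - p7 - p8 ∧
    a1 * b12 + a2 * b22 + a3 * b32 = p5 + p1 + p3 - p7 - p9 ∧
    a1 * b13 + a2 * b23 + a3 * b33 = p6 + p2 + p3 - p8 - p9 := by
  subst hp1 hp2 hp3 hp4 hp5 hp6 hp7 hp8 hp9; refine ⟨by ring, by ring, by ring⟩
end

section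
/- Let R be a commutative ring, n ≥ 1, A an n×3 matrix over R and B a 3×3 matrix over R. For each row index i define pᵢ,₁ = (Aᵢ₂ + B₁₂)(Aᵢ₁ + B₂₁), pᵢ,₂ = (Aᵢ₃ + B₁₃)(Aᵢ₁ + B₃₁), pᵢ,₃ = (Aᵢ₃ + B₂₃)(Aᵢ₂ + B₃₂), pᵢ,₄ = Aᵢ₁(B₁₁ − B₁₂ − B₁₃ − Aᵢ₂ − Aᵢ₃), pᵢ,₅ = Aᵢ₂(B₂₂ − B₂₁ − B₂₃ − Aᵢ₁ − Aᵢ₃), pᵢ,₆ = Aᵢ₃(B₃₃ − B₃₁ − B₃₂ − Aᵢ₁ − Aᵢ₂), and define the row-independent products q₁ = B₁₂B₂₁, q₂ = B₁₃B₃₁, q₃ = B₂₃B₃₂. Then for every row i, (AB)ᵢ₁ = pᵢ,₄ + pᵢ,₁ + pᵢ,₂ − q₁ − q₂, (AB)ᵢ₂ = pᵢ,₅ + pᵢ,₁ + pᵢ,₃ − q₁ − q₃, and (AB)ᵢ₃ = pᵢ,₆ + pᵢ,₂ + pᵢ,₃ − q₂ − q₃. (Correctness of the 6n+3 multiplication algorithm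 of Theorem 2.1: only 6 products per row plus the 3 shared products q₁, q₂, q₃ are used.) -/
/-- Correctness of the 6n+3 multiplication algorithm of Theorem 2.1 for the
product of an n × 3 matrix and a 3 × 3 matrix over a commutative ring. -/
theorem nx3_times_3x3 {R : Type*} [CommRing R] {n : ℕ} (hn : 1 ≤ n)
    (A : Matrix (Fin n) (Fin 3) R) (B : Matrix (Fin 3) (Fin 3) R)
    (q1 q2 q3 : R)
    (hq1 : q1 = B 0 1 * B 1 0)
    (hq2 : q2 = B 0 2 * B 2 0)
    (hq3 : q3 = B 1 2 * B 2 1)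
    (p : Fin n → Fin 6 → R)
    (hp1 : ∀ i, p i 0 = (A i 1 + B 0 1) * (A i 0 + B 1 0))
    (hp2 : ∀ i, p i 1 = (A i 2 + B 0 2) * (A i 0 + B 2 0))
    (hp3 : ∀ i, p i 2 = (A i 2 + B 1 2) * (A i 1 + B 2 1))
    (hp4 : ∀ i, p i 3 = A i 0 * (B 0 0 - B 0 1 - B 0 2 - A i 1 - A i 2))
    (hp5 : ∀ i, p i 4 = A i 1 * (B 1 1 - B 1 0 - B 1 2 - A i 0 - A i 2))
    (hp6 : ∀ i, p i 5 = A i 2 * (B 2 2 - B 2 0 - B 2 1 - A i 0 - A i 1)) :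
    ∀ i : Fin n,
      (A * B) i 0 = p i 3 + p i 0 + p i 1 - q1 - q2 ∧
      (A * B) i 1 = p i 4 + p i 0 + p i 2 - q1 - q3 ∧
      (A * B) i 2 = p i 5 + p i 1 + p i 2 - q2 - q3 := by
  intro i
  refine ⟨?_, ?_, ?_⟩ <;>
    simp [Matrix.mul_apply, Fin.sum_univ_three, hq1, hq2, hq3,
      hp1 i, hp2 i, hp3 i, hp4 i, hp5 i, hp6 i] <;> ring
end

section
/- Let R be a commutative ring and let A and B be 3×3 matrices over R with entries aᵢⱼ and bᵢⱼ. Define the 21 products: for k ∈ {1,2,3}, p₆(k−1)+1 = (aₖ₂ + b₁₂)(aₖ₁ + b₂₁), p₆(k−1)+2 = (aₖ₃ + b₁₃)(aₖ₁ + b₃₁), p₆(k−1)+3 = (aₖ₃ + b₂₃)(aₖ₂ + b₃₂), p₆(k−1)+4 = aₖ₁(b₁₁ − b₁₂ − b₁₃ − aₖ₂ − aₖ₃), p₆(k−1)+5 = aₖ₂(b₂₂ − b₂₁ − b₂₃ − aₖ₁ − aₖ₃), p₆(k−1)+6 = aₖ₃(b₃₃ − b₃₁ − b₃₂ − aₖ₁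 − aₖ₂); and p₁₉ = b₁₂b₂₁, p₂₀ = b₁₃b₃₁, p₂₁ = b₂₃b₃₂. Then AB equals the 3×3 matrix whose k-th row is [p₆(k−1)+4 + p₆(k−1)+1 + p₆(k−1)+2 − p₁₉ − p₂₀, p₆(k−1)+5 + p₆(k−1)+1 + p₆(k−1)+3 − p₁₉ − p₂₁, p₆(k−1)+6 + p₆(k−1)+2 + p₆(k−1)+3 − p₂₀ − p₂₁]. (Corollary 2.2: the product of two 3×3 matrices over a commutative ring can be computed with 21 multiplications.) -/
/-- Corollary 2.2: the product of two 3 × 3 matrices over a commutative ring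
can be computed with 21 multiplications. -/
theorem three_by_three_21_mults {R : Type*} [CommRing R]
    (A B : Matrix (Fin 3) (Fin 3) R)
    (p : Fin 3 → Fin 6 → R) (p19 p20 p21 : R)
    (hp1 : ∀ k, p k 0 = (A k 1 + B 0 1) * (A k 0 + B 1 0))
    (hp2 : ∀ k, p k 1 = (A k 2 + B 0 2) * (A k 0 + B 2 0))
    (hp3 : ∀ k, p k 2 = (A k 2 + B 1 2) * (A k 1 + B 2 1))
    (hp4 : ∀ k, p k 3 = A k 0 * (B 0 0 - B 0 1 - B 0 2 - A k 1 - A k 2))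
    (hp5 : ∀ k, p k 4 = A k 1 * (B 1 1 - B 1 0 - B 1 2 - A k 0 - A k 2))
    (hp6 : ∀ k, p k 5 = A k 2 * (B 2 2 - B 2 0 - B 2 1 - A k 0 - A k 1))
    (hp19 : p19 = B 0 1 * B 1 0)
    (hp20 : p20 = B 0 2 * B 2 0)
    (hp21 : p21 = B 1 2 * B 2 1) :
    A * B = Matrix.of (fun k : Fin 3 =>
      ![p k 3 + p k 0 + p k 1 - p19 - p20,
        p k 4 + p k 0 + p k 2 - p19 - p21,
        p k 5 + p k 1 + p k 2 - p20 - p21]) := by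
  ext i j
  simp only [hp1, hp2, hp3, hp4, hp5, hp6, hp19, hp20, hp21, Matrix.mul_apply,
    Fin.sum_univ_three, Matrix.of_apply]
  fin_cases j <;> simp <;> ring
end

section
/- Let R be a commutative ring, l ≥ 1, m ≥ 3 with m odd, A an l×3 matrix over R and B a 3×m matrix over R. Define C to be the l×m matrix given, for each row i, by: Cᵢ₁ = (Aᵢ₁ + B₂₁)(Aᵢ₂ + B₁₂) + (Aᵢ₁ + B₃₁)(Aᵢ₃ + B₁₃) + Aᵢ₁(B₁₁ − B₁₂ − B₁₃ − Aᵢ₂ − Aᵢ₃) − B₁₂B₂₁ − B₁₃B₃₁; Cᵢ₂ = (Aᵢ₁ + B₂₁)(Aᵢ₂ + B₁₂) + (Aᵢ₂ + B₃₂)(Aᵢ₃ + B₂₃) + Aᵢ₂(B₂₂ − B₂₁ − B₂₃ − Aᵢ₁ − Aᵢ₃) − B₁₂B₂₁ − B₂₃B₃₂; Cᵢ₃ = (Aᵢ₁ + B₃₁)(Aᵢ₃ + B₁₃) + (Aᵢ₂ + B₃₂)(Aᵢ₃ + B₂₃) + Aᵢ₃(B₃₃ − B₃₁ − B₃₂ −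 Aᵢ₁ − Aᵢ₂) − B₁₃B₃₁ − B₂₃B₃₂; and for each even j with 4 ≤ j ≤ m−1: Cᵢⱼ = (Aᵢ₁ + B₂₁)(Aᵢ₂ + B₁₂) + (Aᵢ₁ + B₃₁)(Aᵢ₃ + B₁₃) + (Aᵢ₁ + B₂₁ − B₂ⱼ)(−Aᵢ₂ − B₁₂ + B₁ⱼ − B₁₍ⱼ₊₁₎) + (Aᵢ₁ + B₃₁ − B₃ⱼ)(−Aᵢ₃ − B₁₃ + B₁₍ⱼ₊₁₎) − B₁₂B₂₁ − B₁₃B₃₁ − (B₂₁ − B₂ⱼ)(−B₁₂ + B₁ⱼ − B₁₍ⱼ₊₁₎) − (B₃₁ − B₃ⱼ)(−B₁₃ + B₁₍ⱼ₊₁₎), and Cᵢ₍ⱼ₊₁₎ = (Aᵢ₁ + B₃₁)(Aᵢ₃ + B₁₃) + (Aᵢ₂ + B₃₂)(Aᵢ₃ + B₂₃) + (Aᵢ₁ + B₃₁ − B₃ⱼ)(−Aᵢ₃ − B₁₃ + B₁₍ⱼ₊₁₎) + (Aᵢ₂ + B₃₂ + B₃ⱼ − B₃₍ⱼ₊₁₎)(−Aᵢ₃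 − B₂₃ + B₂₍ⱼ₊₁₎) − B₁₃B₃₁ − B₂₃B₃₂ − (B₃₁ − B₃ⱼ)(−B₁₃ + B₁₍ⱼ₊₁₎) − (B₃₂ + B₃ⱼ − B₃₍ⱼ₊₁₎)(−B₂₃ + B₂₍ⱼ₊₁₎). Then C = AB. (Correctness of the 3(lm + l + m − 1)/2-multiplication scheme for A₁B₁ in Case 1 of Theorem 2.3.) -/
/-- Correctness of the `3(lm + l + m - 1)/2`-multiplication scheme for the
product of an `l × 3` matrix and a `3 × m` matrix (`m ≥ 3` odd), Case 1 of
Theorem 2.3 in the paper. Columns are numbered `1, …, m` in the paper; here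
column `j` corresponds to the `Fin m` index `j - 1`. The scalars `bst` denote
the entries `B s t` of the first three columns of `B`, and in the hypotheses
for a column pair `(j, j + 1)` the scalars `u1, u2, u3` (resp. `v1, v2, v3`)
denote the entries of column `j` (resp. `j + 1`) of `B`. -/
theorem case_one_scheme {R : Type*} [CommRing R] {l m : ℕ}
    (hl : 1 ≤ l) (hm : 3 ≤ m) (hmodd : Odd m)
    (A : Matrix (Fin l) (Fin 3) R) (B : Matrix (Fin 3) (Fin m) R)
    (C : Matrix (Fin l) (Fin m) R)
    (b11 b12 b13 b21 b22 b23 b31 b32 b33 : R)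
    (hb11 : b11 = B 0 ⟨0, Nat.lt_of_lt_of_le (by decide) hm⟩)
    (hb12 : b12 = B 0 ⟨1, Nat.lt_of_lt_of_le (by decide) hm⟩)
    (hb13 : b13 = B 0 ⟨2, Nat.lt_of_lt_of_le (by decide) hm⟩)
    (hb21 : b21 = B 1 ⟨0, Nat.lt_of_lt_of_le (by decide) hm⟩)
    (hb22 : b22 = B 1 ⟨1, Nat.lt_of_lt_of_le (by decide) hm⟩)
    (hb23 : b23 = B 1 ⟨2, Nat.lt_of_lt_of_le (by decide) hm⟩)
    (hb31 : b31 = B 2 ⟨0, Nat.lt_of_lt_of_le (by decide) hm⟩)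
    (hb32 : b32 = B 2 ⟨1, Nat.lt_of_lt_of_le (by decide) hm⟩)
    (hb33 : b33 = B 2 ⟨2, Nat.lt_of_lt_of_le (by decide) hm⟩)
    (hC1 : ∀ i, C i ⟨0, Nat.lt_of_lt_of_le (by decide) hm⟩ =
      (A i 0 + b21) * (A i 1 + b12) + (A i 0 + b31) * (A i 2 + b13) + A i 0 * (b11 - b12 - b13 - A i 1 - A i 2) - b12 * b21 - b13 * b31)
    (hC2 : ∀ i, C i ⟨1, Nat.lt_of_lt_of_le (by decide) hm⟩ =
      (A i 0 + b21) * (A i 1 + b12) + (A i 1 + b32) * (A i 2 + b23) + A i 1 * (b22 - b21 - b23 - A i 0 - A i 2) - b12 * b21 - b23 * b32)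
    (hC3 : ∀ i, C i ⟨2, Nat.lt_of_lt_of_le (by decide) hm⟩ =
      (A i 0 + b31) * (A i 2 + b13) + (A i 1 + b32) * (A i 2 + b23) + A i 2 * (b33 - b31 - b32 - A i 0 - A i 1) - b13 * b31 - b23 * b32)
    (hCj : ∀ i, ∀ j : ℕ, ∀ _hj4 : 4 ≤ j, ∀ _hjm : j + 1 ≤ m, ∀ _hje : Even j,
      ∀ u1 u2 u3 v1 v2 v3 : R,
      u1 = B 0 ⟨j - 1, Nat.lt_of_le_of_lt (Nat.sub_le j 1) _hjm⟩ → u2 = B 1 ⟨j - 1, Nat.lt_of_le_of_lt (Nat.sub_le j 1) _hjm⟩ → u3 = B 2 ⟨j - 1, Nat.lt_of_le_of_lt (Nat.sub_le j 1) _hjm⟩ →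
      v1 = B 0 ⟨j, _hjm⟩ → v2 = B 1 ⟨j, _hjm⟩ → v3 = B 2 ⟨j, _hjm⟩ →
      C i ⟨j - 1, Nat.lt_of_le_of_lt (Nat.sub_le j 1) _hjm⟩ =
      (A i 0 + b21) * (A i 1 + b12) + (A i 0 + b31) * (A i 2 + b13) + (A i 0 + b21 - u2) * (-A i 1 - b12 + u1 - v1) + (A i 0 + b31 - u3) * (-A i 2 - b13 + v1) - b12 * b21 - b13 * b31 - (b21 - u2) * (-b12 + u1 - v1) - (b31 - u3) * (-b13 + v1))
    (hCj1 : ∀ i, ∀ j : ℕ, ∀ _hj4 : 4 ≤ j, ∀ _hjm : j + 1 ≤ m, ∀ _hje : Even j,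
      ∀ u1 u2 u3 v1 v2 v3 : R,
      u1 = B 0 ⟨j - 1, Nat.lt_of_le_of_lt (Nat.sub_le j 1) _hjm⟩ → u2 = B 1 ⟨j - 1, Nat.lt_of_le_of_lt (Nat.sub_le j 1) _hjm⟩ → u3 = B 2 ⟨j - 1, Nat.lt_of_le_of_lt (Nat.sub_le j 1) _hjm⟩ →
      v1 = B 0 ⟨j, _hjm⟩ → v2 = B 1 ⟨j, _hjm⟩ → v3 = B 2 ⟨j, _hjm⟩ →
      C i ⟨j, _hjm⟩ =
      (A i 0 + b31) * (A i 2 + b13) + (A i 1 + b32) * (A i 2 + b23) + (A i 0 + b31 - u3) * (-A i 2 - b13 + v1) + (A i 1 + b32 + u3 - v3) * (-A i 2 - b23 + v2) - b13 * b31 - b23 * b32 - (b31 - u3) * (-b13 + v1) - (b32 + u3 - v3) * (-b23 + v2)) :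
    C = A * B := by
  have hm2 : m % 2 = 1 := Nat.odd_iff.mp hmodd
  ext i ⟨n, hn⟩
  rw [Matrix.mul_apply, Fin.sum_univ_three]
  match n, hn with
  | 0, hn =>
    rw [show C i (⟨0, hn⟩ : Fin m) = _ from hC1 i, hb11, hb12, hb13, hb21, hb31]
    ring
  | 1, hn =>
    rw [show C i (⟨1, hn⟩ : Fin m) = _ from hC2 i, hb12, hb21, hb22, hb23, hb32]
    ring
  | 2, hn =>
    rw [show C i (⟨2, hn⟩ : Fin m) = _ from hC3 i, hb13, hb31, hb23, hb32, hb33]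
    ring
  | (k+3), hn =>
    rcases Nat.even_or_odd (k+3) with he | ho
    · have hk2 : (k+3) % 2 = 0 := Nat.even_iff.mp he
      have H := hCj1 i (k+3) (by omega) hn he _ _ _ _ _ _ rfl rfl rfl rfl rfl rfl
      rw [show C i (⟨k+3, hn⟩ : Fin m) = _ from H, hb13, hb31, hb23, hb32]
      ring
    · have hk2 : (k+3) % 2 = 1 := Nat.odd_iff.mp ho
      have h1 : (k+4) + 1 ≤ m := by omega
      have he4 : Even (k+4) := by
        rcases ho with ⟨t, ht⟩; exact ⟨t + 1, by omega⟩
      have H := hCj i (k+4) (by omega) h1 he4 _ _ _ _ _ _ rfl rfl rfl rfl rfl rfl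
      simp only [show k + 4 - 1 = k + 3 from rfl] at H
      rw [show C i (⟨k+3, hn⟩ : Fin m) = _ from H, hb12, hb13, hb21, hb31]
      ring
end

section
/- Let R be a commutative ring, l ≥ 1, m ≥ 4 with m even, A an l×3 matrix over R and B a 3×m matrix over R. Define C to be the l×m matrix given, for each row i, by: Cᵢ₁ = (Aᵢ₁ + B₂₁)(Aᵢ₂ + B₁₂) + (Aᵢ₁ + B₃₁)(Aᵢ₃ + B₁₃) + Aᵢ₁(B₁₁ − B₁₂ − B₁₃ − Aᵢ₂ − Aᵢ₃) − B₁₂B₂₁ − B₁₃B₃₁; Cᵢ₂ = (Aᵢ₁ + B₂₁)(Aᵢ₂ + B₁₂) + (Aᵢ₂ + B₃₂)(Aᵢ₃ + B₂₃) + Aᵢ₂(B₂₂ − B₂₁ − B₂₃ − Aᵢ₁ − Aᵢ₃) − B₁₂B₂₁ − B₂₃B₃₂; Cᵢ₃ = (Aᵢ₁ + B₃₁)(Aᵢ₃ + B₁₃) + (Aᵢ₂ + B₃₂)(Aᵢ₃ + B₂₃) + Aᵢ₃(B₃₃ − B₃₁ − B₃₂ − Aᵢ₁ − Aᵢ₂)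 − B₁₃B₃₁ − B₂₃B₃₂; Cᵢ₄ = (Aᵢ₁ + B₂₁)(Aᵢ₂ + B₁₂) + (Aᵢ₁ + B₂₁ − B₂₄)(−Aᵢ₂ − B₁₂ + B₁₄) + Aᵢ₃B₃₄ − B₁₂B₂₁ − (B₂₁ − B₂₄)(−B₁₂ + B₁₄); and for each odd j with 5 ≤ j ≤ m−1: Cᵢⱼ = (Aᵢ₁ + B₂₁)(Aᵢ₂ + B₁₂) + (Aᵢ₁ + B₃₁)(Aᵢ₃ + B₁₃) + (Aᵢ₁ + B₂₁ − B₂ⱼ)(−Aᵢ₂ − B₁₂ + B₁ⱼ − B₁₍ⱼ₊₁₎) + (Aᵢ₁ + B₃₁ − B₃ⱼ)(−Aᵢ₃ − B₁₃ + B₁₍ⱼ₊₁₎) − B₁₂B₂₁ − B₁₃B₃₁ − (B₂₁ − B₂ⱼ)(−B₁₂ + B₁ⱼ − B₁₍ⱼ₊₁₎) − (B₃₁ − B₃ⱼ)(−B₁₃ + B₁₍ⱼ₊₁₎), and Cᵢ₍ⱼ₊₁₎ = (Aᵢ₁ + B₃₁)(Aᵢ₃ + B₁₃) + (Aᵢ₂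 + B₃₂)(Aᵢ₃ + B₂₃) + (Aᵢ₁ + B₃₁ − B₃ⱼ)(−Aᵢ₃ − B₁₃ + B₁₍ⱼ₊₁₎) + (Aᵢ₂ + B₃₂ + B₃ⱼ − B₃₍ⱼ₊₁₎)(−Aᵢ₃ − B₂₃ + B₂₍ⱼ₊₁₎) − B₁₃B₃₁ − B₂₃B₃₂ − (B₃₁ − B₃ⱼ)(−B₁₃ + B₁₍ⱼ₊₁₎) − (B₃₂ + B₃ⱼ − B₃₍ⱼ₊₁₎)(−B₂₃ + B₂₍ⱼ₊₁₎). Then C = AB. (Correctness of the 2(l − 1) + 3(lm + m)/2-multiplication scheme for A₁B₁ in Case 2 of Theorem 2.3.) -/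
/-- Correctness of the `2(l - 1) + 3(lm + m)/2`-multiplication scheme for the
product of an `l × 3` matrix and a `3 × m` matrix (`m ≥ 4` even), Case 2 of
Theorem 2.3 in the paper. Columns are numbered `1, …, m` in the paper; here
column `j` corresponds to the `Fin m` index `j - 1`. The scalars `bst` denote
the entries `B s t` of the first four columns of `B`, and in the hypotheses
for a column pair `(j, j + 1)` the scalars `u1, u2, u3` (resp. `v1, v2, v3`)
denote the entries of column `j` (resp. `j + 1`) of `B`. -/
theorem case_two_scheme {R : Type*} [CommRing R] {l m : ℕ}
    (hl : 1 ≤ l) (hm : 4 ≤ m) (hmeven : Even m)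
    (A : Matrix (Fin l) (Fin 3) R) (B : Matrix (Fin 3) (Fin m) R)
    (C : Matrix (Fin l) (Fin m) R)
    (b11 b12 b13 b14 b21 b22 b23 b24 b31 b32 b33 b34 : R)
    (hb11 : b11 = B 0 ⟨0, Nat.lt_of_lt_of_le (by decide) hm⟩)
    (hb12 : b12 = B 0 ⟨1, Nat.lt_of_lt_of_le (by decide) hm⟩)
    (hb13 : b13 = B 0 ⟨2, Nat.lt_of_lt_of_le (by decide) hm⟩)
    (hb14 : b14 = B 0 ⟨3, Nat.lt_of_lt_of_le (by decide) hm⟩)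
    (hb21 : b21 = B 1 ⟨0, Nat.lt_of_lt_of_le (by decide) hm⟩)
    (hb22 : b22 = B 1 ⟨1, Nat.lt_of_lt_of_le (by decide) hm⟩)
    (hb23 : b23 = B 1 ⟨2, Nat.lt_of_lt_of_le (by decide) hm⟩)
    (hb24 : b24 = B 1 ⟨3, Nat.lt_of_lt_of_le (by decide) hm⟩)
    (hb31 : b31 = B 2 ⟨0, Nat.lt_of_lt_of_le (by decide) hm⟩)
    (hb32 : b32 = B 2 ⟨1, Nat.lt_of_lt_of_le (by decide) hm⟩)
    (hb33 : b33 = B 2 ⟨2, Nat.lt_of_lt_of_le (by decide) hm⟩)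
    (hb34 : b34 = B 2 ⟨3, Nat.lt_of_lt_of_le (by decide) hm⟩)
    (hC1 : ∀ i, C i ⟨0, Nat.lt_of_lt_of_le (by decide) hm⟩ =
      (A i 0 + b21) * (A i 1 + b12) + (A i 0 + b31) * (A i 2 + b13) + A i 0 * (b11 - b12 - b13 - A i 1 - A i 2) - b12 * b21 - b13 * b31)
    (hC2 : ∀ i, C i ⟨1, Nat.lt_of_lt_of_le (by decide) hm⟩ =
      (A i 0 + b21) * (A i 1 + b12) + (A i 1 + b32) * (A i 2 + b23) + A i 1 * (b22 - b21 - b23 - A i 0 - A i 2) - b12 * b21 - b23 * b32)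
    (hC3 : ∀ i, C i ⟨2, Nat.lt_of_lt_of_le (by decide) hm⟩ =
      (A i 0 + b31) * (A i 2 + b13) + (A i 1 + b32) * (A i 2 + b23) + A i 2 * (b33 - b31 - b32 - A i 0 - A i 1) - b13 * b31 - b23 * b32)
    (hC4 : ∀ i, C i ⟨3, Nat.lt_of_lt_of_le (by decide) hm⟩ =
      (A i 0 + b21) * (A i 1 + b12) + (A i 0 + b21 - b24) * (-A i 1 - b12 + b14) + A i 2 * b34 - b12 * b21 - (b21 - b24) * (-b12 + b14))
    (hCj : ∀ i, ∀ j : ℕ, ∀ _hj5 : 5 ≤ j, ∀ _hjm : j + 1 ≤ m, ∀ _hjo : Odd j,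
      ∀ u1 u2 u3 v1 v2 v3 : R,
      u1 = B 0 ⟨j - 1, Nat.lt_of_le_of_lt (Nat.sub_le j 1) _hjm⟩ → u2 = B 1 ⟨j - 1, Nat.lt_of_le_of_lt (Nat.sub_le j 1) _hjm⟩ → u3 = B 2 ⟨j - 1, Nat.lt_of_le_of_lt (Nat.sub_le j 1) _hjm⟩ →
      v1 = B 0 ⟨j, _hjm⟩ → v2 = B 1 ⟨j, _hjm⟩ → v3 = B 2 ⟨j, _hjm⟩ →
      C i ⟨j - 1, Nat.lt_of_le_of_lt (Nat.sub_le j 1) _hjm⟩ =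
      (A i 0 + b21) * (A i 1 + b12) + (A i 0 + b31) * (A i 2 + b13) + (A i 0 + b21 - u2) * (-A i 1 - b12 + u1 - v1) + (A i 0 + b31 - u3) * (-A i 2 - b13 + v1) - b12 * b21 - b13 * b31 - (b21 - u2) * (-b12 + u1 - v1) - (b31 - u3) * (-b13 + v1))
    (hCj1 : ∀ i, ∀ j : ℕ, ∀ _hj5 : 5 ≤ j, ∀ _hjm : j + 1 ≤ m, ∀ _hjo : Odd j,
      ∀ u1 u2 u3 v1 v2 v3 : R,
      u1 = B 0 ⟨j - 1, Nat.lt_of_le_of_lt (Nat.sub_le j 1) _hjm⟩ → u2 = B 1 ⟨j - 1, Nat.lt_of_le_of_lt (Nat.sub_le j 1) _hjm⟩ → u3 = B 2 ⟨j - 1, Nat.lt_of_le_of_lt (Nat.sub_le j 1) _hjm⟩ →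
      v1 = B 0 ⟨j, _hjm⟩ → v2 = B 1 ⟨j, _hjm⟩ → v3 = B 2 ⟨j, _hjm⟩ →
      C i ⟨j, _hjm⟩ =
      (A i 0 + b31) * (A i 2 + b13) + (A i 1 + b32) * (A i 2 + b23) + (A i 0 + b31 - u3) * (-A i 2 - b13 + v1) + (A i 1 + b32 + u3 - v3) * (-A i 2 - b23 + v2) - b13 * b31 - b23 * b32 - (b31 - u3) * (-b13 + v1) - (b32 + u3 - v3) * (-b23 + v2)) :
    C = A * B := by
  subst hb11 hb12 hb13 hb14 hb21 hb22 hb23 hb24 hb31 hb32 hb33 hb34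
  funext i jf
  obtain ⟨j, hj⟩ := jf
  rw [Matrix.mul_apply, Fin.sum_univ_three]
  match j, hj with
  | 0, hj => exact (hC1 i).trans (by ring)
  | 1, hj => exact (hC2 i).trans (by ring)
  | 2, hj => exact (hC3 i).trans (by ring)
  | 3, hj => exact (hC4 i).trans (by ring)
  | (k+4), hj =>
    rcases Nat.even_or_odd (k+4) with he | ho
    · have h5 : 5 ≤ k + 5 := by omega
      have hjm : (k + 5) + 1 ≤ m := by
        rcases hmeven with ⟨a, ha⟩; rcases he with ⟨b, hb⟩; omega
      have ho' : Odd (k + 5) := he.add_one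
      have key := hCj i (k+5) h5 hjm ho'
        (B 0 ⟨k+4, hj⟩) (B 1 ⟨k+4, hj⟩) (B 2 ⟨k+4, hj⟩)
        (B 0 ⟨k+5, hjm⟩) (B 1 ⟨k+5, hjm⟩) (B 2 ⟨k+5, hjm⟩)
        rfl rfl rfl rfl rfl rfl
      exact key.trans (by ring)
    · have h5 : 5 ≤ k + 4 := by rcases ho with ⟨b, hb⟩; omega
      have hjm : (k + 4) + 1 ≤ m := hj
      have key := hCj1 i (k+4) h5 hjm ho
        (B 0 ⟨k+3, by omega⟩) (B 1 ⟨k+3, by omega⟩) (B 2 ⟨k+3, by omega⟩)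
        (B 0 ⟨k+4, hj⟩) (B 1 ⟨k+4, hj⟩) (B 2 ⟨k+4, hj⟩)
        rfl rfl rfl rfl rfl rfl
      exact key.trans (by ring)
end
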